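/- The functional H̄ is strictly concave on H²_T: for any ν, ω ∈ H²_T such that (P × Leb)({(ω̃,t) : ν_t ≠ ω_t}) > 0, and any ρ ∈ (0,1), it holds that H̄(ρν + (1−ρ)ω) > ρ H̄(ν) + (1−ρ) H̄(ω). -/

import Mathlib

open MeasureTheory Set
open scoped ENNReal

/-- The controlled inventory process `q^ν_t = Q₀ + ∫₀ᵗ ν_u du`. -/
noncomputable def inventory {Ω : Type*} (Q0 : Ω → ℝ) (ν : ℝ → Ω → ℝ) (t : ℝ) (ω : Ω) : ℝ :=
  Q0 ω + ∫ u in (0 : ℝ)..t, ν u ω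

/-- The objective functional
`H̄(ν) = E[∫₀ᵀ ( q^ν_t (Â_t + λ ν̄_t) − a ν_t² − 2Ψ ν_t q^ν_t − φ (q^ν_t)² ) dt]`. -/
noncomputable def Hbar {Ω : Type*} [MeasurableSpace Ω] (P : Measure Ω) (T : ℝ)
    (Ahat nubar : ℝ → Ω → ℝ) (l a φ Ψ : ℝ) (Q0 : Ω → ℝ) (ν : ℝ → Ω → ℝ) : ℝ :=
  ∫ ω, (∫ t in Icc (0 : ℝ) T,
      (inventory Q0 ν t ω * (Ahat t ω + l * nubar t ω) - a * (ν t ω) ^ 2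
        - 2 * Ψ * ν t ω * inventory Q0 ν t ω - φ * (inventory Q0 ν t ω) ^ 2)) ∂P

/-!
Write `H̄(ν) = E ∫₀ᵀ r(c_t, q_t, ν_t) dt` with `c = Â + λν̄` and
`r(c, q, v) = q c - (a v² + 2Ψ v q + φ q²)`. The inventory is affine in the control, so the defect
of `H̄` along `ρν + (1-ρ)w` is exactly `ρ(1-ρ) E ∫₀ᵀ (a δ² + 2Ψ δ Δq + φ Δq²) dt`, where `δ = ν - w`
and `Δq_t = ∫₀ᵗ δ`. The cross term is nonnegative because `∫₀ᵀ δ_t ∫₀ᵗ δ dt = (∫₀ᵀ δ)² / 2`, and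
`E ∫₀ᵀ δ² dt > 0` because `ν ≠ w` on a set of positive `P ⊗ dt` measure. All these integrals are
finite since `(∫₀ᵗ δ)² ≤ T ∫₀ᵀ δ²` puts the inventory in `L²(P ⊗ dt)`.
-/

open Function

section SquareIntegrable

variable {α β : Type*} [MeasurableSpace α] [MeasurableSpace β] {μ : Measure α} {ν : Measure β}

theorem memLp_two_iff_lintegral_ofReal_sq_lt_top {f : α → ℝ} (hf : AEStronglyMeasurable f μ) :
    MemLp f 2 μ ↔ ∫⁻ x, ENNReal.ofReal (f x ^ 2) ∂μ < ∞ := by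
  rw [memLp_two_iff_integrable_sq hf, Integrable,
    hasFiniteIntegral_iff_ofReal (ae_of_all _ fun x => sq_nonneg (f x))]
  exact and_iff_right (hf.pow 2)

theorem memLp_two_prod_iff [SFinite ν] {f : α × β → ℝ} (hf : AEStronglyMeasurable f (μ.prod ν)) :
    MemLp f 2 (μ.prod ν) ↔ ∫⁻ x, ∫⁻ y, ENNReal.ofReal (f (x, y) ^ 2) ∂ν ∂μ < ∞ := by
  rw [memLp_two_iff_lintegral_ofReal_sq_lt_top hf,
    lintegral_prod _ (hf.aemeasurable.pow_const 2).ennreal_ofReal]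

theorem memLp_two_uncurry_swap [SFinite ν] {F : β → α → ℝ} (hF : Measurable (uncurry F))
    (hF2 : ∫⁻ x, ∫⁻ y, ENNReal.ofReal (F y x ^ 2) ∂ν ∂μ < ∞) :
    MemLp (fun p : α × β => F p.2 p.1) 2 (μ.prod ν) :=
  (memLp_two_prod_iff (hF.comp measurable_swap).aestronglyMeasurable).2 hF2

theorem ofReal_sq_eq_enorm_sq (x : ℝ) : ENNReal.ofReal (x ^ 2) = ‖x‖ₑ ^ 2 := by
  rw [Real.enorm_eq_ofReal_abs, ← ENNReal.ofReal_pow (abs_nonneg x), sq_abs]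

theorem sq_lintegral_enorm_le {f : α → ℝ} (hf : AEStronglyMeasurable f μ) :
    (∫⁻ x, ‖f x‖ₑ ∂μ) ^ 2 ≤ μ univ * ∫⁻ x, ‖f x‖ₑ ^ 2 ∂μ := by
  have h := eLpNorm_le_eLpNorm_mul_rpow_measure_univ one_le_two hf
  rw [eLpNorm_one_eq_lintegral_enorm, eLpNorm_eq_lintegral_rpow_enorm_toReal two_ne_zero
    ENNReal.ofNat_ne_top] at h
  calc (∫⁻ x, ‖f x‖ₑ ∂μ) ^ 2 ≤ _ := pow_le_pow_left' h 2
    _ = μ univ * ∫⁻ x, ‖f x‖ₑ ^ 2 ∂μ := by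
      rw [mul_pow, ← ENNReal.rpow_natCast, ← ENNReal.rpow_natCast (μ univ ^ _),
        ← ENNReal.rpow_mul, ← ENNReal.rpow_mul, mul_comm]
      simp only [ENNReal.toReal_ofNat, ENNReal.toReal_one, ENNReal.rpow_ofNat]
      norm_num

theorem stronglyMeasurable_primitive {F : ℝ → α → ℝ} (hF : Measurable (uncurry F)) :
    StronglyMeasurable (fun p : α × ℝ => ∫ u in (0:ℝ)..p.2, F u p.1) := by
  have hIoc : ∀ a b : α × ℝ → ℝ, Measurable a → Measurable b →
      StronglyMeasurable fun p => ∫ u in Ioc (a p) (b p), F u p.1 := by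
    intro a b ha hb
    simp_rw [← integral_indicator measurableSet_Ioc]
    refine StronglyMeasurable.integral_prod_right (Measurable.stronglyMeasurable ?_)
    simp only [uncurry_def, indicator_apply]
    refine Measurable.ite ?_ (hF.comp (measurable_snd.prodMk measurable_fst.fst)) measurable_const
    exact (measurableSet_lt (ha.comp measurable_fst) measurable_snd).inter
      (measurableSet_le measurable_snd (hb.comp measurable_fst))
  exact (hIoc _ _ measurable_const measurable_snd).sub (hIoc _ _ measurable_snd measurable_const)

theorem ofReal_sq_intervalIntegral_le {f : ℝ → ℝ} {T t : ℝ}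
    (hf : AEStronglyMeasurable f (volume.restrict (Icc 0 T))) (ht : t ∈ Icc 0 T) :
    ENNReal.ofReal ((∫ u in (0:ℝ)..t, f u) ^ 2)
      ≤ volume (Icc 0 T) * ∫⁻ u in Icc 0 T, ENNReal.ofReal (f u ^ 2) := by
  calc ENNReal.ofReal ((∫ u in (0:ℝ)..t, f u) ^ 2)
      = ‖∫ u in Ioc 0 t, f u‖ₑ ^ 2 := by
        rw [ofReal_sq_eq_enorm_sq, intervalIntegral.integral_of_le ht.1]
    _ ≤ (∫⁻ u in Icc 0 T, ‖f u‖ₑ) ^ 2 := by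
        gcongr
        exact (enorm_integral_le_lintegral_enorm _).trans
          (lintegral_mono_set (Ioc_subset_Icc_self.trans (Icc_subset_Icc le_rfl ht.2)))
    _ ≤ volume (Icc 0 T) * ∫⁻ u in Icc 0 T, ENNReal.ofReal (f u ^ 2) := by
        have h := sq_lintegral_enorm_le hf
        simp_rw [ofReal_sq_eq_enorm_sq]
        rwa [Measure.restrict_apply_univ] at h

theorem memLp_two_primitive {T : ℝ} {F : ℝ → α → ℝ} (hF : Measurable (uncurry F))
    (hF2 : ∫⁻ x, (∫⁻ t in Icc 0 T, ENNReal.ofReal (F t x ^ 2)) ∂μ < ∞) :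
    MemLp (fun p : α × ℝ => ∫ u in (0:ℝ)..p.2, F u p.1) 2
      (μ.prod (volume.restrict (Icc 0 T))) := by
  set M := volume (Icc (0:ℝ) T)
  have hM : M ≠ ∞ := measure_Icc_lt_top.ne
  have hbound x : ∀ t ∈ Icc (0:ℝ) T, ENNReal.ofReal ((∫ u in (0:ℝ)..t, F u x) ^ 2)
      ≤ M * ∫⁻ u in Icc 0 T, ENNReal.ofReal (F u x ^ 2) := fun t =>
    ofReal_sq_intervalIntegral_le
      (hF.comp (measurable_id.prodMk measurable_const)).aestronglyMeasurable
  refine (memLp_two_prod_iff (stronglyMeasurable_primitive hF).aestronglyMeasurable).2 ?_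
  calc ∫⁻ x, (∫⁻ t in Icc 0 T, ENNReal.ofReal ((∫ u in (0:ℝ)..t, F u x) ^ 2)) ∂μ
      ≤ ∫⁻ x, (∫⁻ t in Icc 0 T, M * ∫⁻ u in Icc 0 T, ENNReal.ofReal (F u x ^ 2)) ∂μ :=
        lintegral_mono fun x => setLIntegral_mono' measurableSet_Icc (hbound x)
    _ = M * M * ∫⁻ x, (∫⁻ u in Icc 0 T, ENNReal.ofReal (F u x ^ 2)) ∂μ := by
        simp_rw [setLIntegral_const]
        rw [lintegral_mul_const' _ _ hM, lintegral_const_mul' _ _ hM]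
        ring
    _ < ∞ := ENNReal.mul_lt_top (ENNReal.mul_lt_top hM.lt_top hM.lt_top) hF2

theorem integral_sq_pos_of_memLp {f : α → ℝ} (hf : MemLp f 2 μ) (h : 0 < μ (support f)) :
    0 < ∫ x, f x ^ 2 ∂μ := by
  rwa [integral_pos_iff_support_of_nonneg (fun x => sq_nonneg (f x)) hf.integrable_sq,
    support_pow f two_ne_zero]

end SquareIntegrable

theorem intervalIntegral_mul_primitive {f : ℝ → ℝ} {a b : ℝ}
    (hf : IntervalIntegrable f volume a b) :
    ∫ x in a..b, f x * ∫ t in a..x, f t = (∫ t in a..b, f t) ^ 2 / 2 := by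
  set F := fun x => ∫ t in a..x, f t
  have hF : AbsolutelyContinuousOnInterval F a b :=
    hf.absolutelyContinuousOnInterval_intervalIntegral left_mem_uIcc
  have hderiv : ∫ x in a..b, f x * F x = ∫ x in a..b, deriv F x * F x := by
    refine intervalIntegral.integral_congr_ae ?_
    filter_upwards [hf.ae_hasDerivAt_integral] with x hx hxab
    rw [(hx (uIoc_subset_uIcc hxab) a left_mem_uIcc).deriv]
  have hcomm : ∫ x in a..b, F x * deriv F x = ∫ x in a..b, deriv F x * F x :=
    intervalIntegral.integral_congr fun x _ => mul_comm _ _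
  have hparts := hF.integral_mul_deriv_eq_deriv_mul hF
  have hFa : F a = 0 := intervalIntegral.integral_same
  change ∫ x in a..b, f x * F x = F b ^ 2 / 2
  rw [hcomm, hFa] at hparts
  linarith

def reward (a φ Ψ c q v : ℝ) : ℝ :=
  q * c - a * v ^ 2 - 2 * Ψ * v * q - φ * q ^ 2

def quadraticCost (a φ Ψ q v : ℝ) : ℝ :=
  a * v ^ 2 + 2 * Ψ * (v * q) + φ * q ^ 2

theorem reward_convex_combination (a φ Ψ c q₁ v₁ q₂ v₂ ρ : ℝ) :
    reward a φ Ψ c (ρ * q₁ + (1 - ρ) * q₂) (ρ * v₁ + (1 - ρ) * v₂)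
      = ρ * reward a φ Ψ c q₁ v₁ + (1 - ρ) * reward a φ Ψ c q₂ v₂
        + ρ * (1 - ρ) * quadraticCost a φ Ψ (q₁ - q₂) (v₁ - v₂) := by
  unfold reward quadraticCost
  ring

section Integrals

variable {α : Type*} [MeasurableSpace α] {μ : Measure α} {a φ Ψ : ℝ} {c q v : α → ℝ}

theorem integrable_reward (hc : MemLp c 2 μ) (hq : MemLp q 2 μ) (hv : MemLp v 2 μ) :
    Integrable (fun x => reward a φ Ψ (c x) (q x) (v x)) μ :=
  (((hq.integrable_mul hc).sub (hv.integrable_sq.const_mul a)).sub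
    ((hv.integrable_mul hq).const_mul (2 * Ψ))).sub (hq.integrable_sq.const_mul φ) |>.congr
    (ae_of_all _ fun x => by simp only [reward, Pi.mul_apply, Pi.sub_apply]; ring)

theorem integrable_quadraticCost (hq : MemLp q 2 μ) (hv : MemLp v 2 μ) :
    Integrable (fun x => quadraticCost a φ Ψ (q x) (v x)) μ :=
  ((hv.integrable_sq.const_mul a).add ((hv.integrable_mul hq).const_mul (2 * Ψ))).add
    (hq.integrable_sq.const_mul φ)

theorem integral_quadraticCost (hq : MemLp q 2 μ) (hv : MemLp v 2 μ) :
    ∫ x, quadraticCost a φ Ψ (q x) (v x) ∂μ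
      = a * ∫ x, v x ^ 2 ∂μ + 2 * Ψ * ∫ x, v x * q x ∂μ + φ * ∫ x, q x ^ 2 ∂μ := by
  have hv2 : Integrable (fun x => a * v x ^ 2) μ := hv.integrable_sq.const_mul a
  have hvq : Integrable (fun x => 2 * Ψ * (v x * q x)) μ :=
    (hv.integrable_mul hq).const_mul (2 * Ψ)
  have hq2 : Integrable (fun x => φ * q x ^ 2) μ := hq.integrable_sq.const_mul φ
  have hsum : Integrable (fun x => a * v x ^ 2 + 2 * Ψ * (v x * q x)) μ := hv2.add hvq
  simp only [quadraticCost]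
  rw [integral_add hsum hq2, integral_add hv2 hvq, integral_const_mul,
    integral_const_mul, integral_const_mul]

theorem integral_quadraticCost_pos (ha : 0 < a) (hφ : 0 ≤ φ) (hΨ : 0 ≤ Ψ) (hq : MemLp q 2 μ)
    (hv : MemLp v 2 μ) (hvq : 0 ≤ ∫ x, v x * q x ∂μ) (hv0 : 0 < μ (support v)) :
    0 < ∫ x, quadraticCost a φ Ψ (q x) (v x) ∂μ := by
  have hv2 := mul_pos ha (integral_sq_pos_of_memLp hv hv0)
  have hq2 := mul_nonneg hφ (integral_nonneg fun x => sq_nonneg (q x) : 0 ≤ ∫ x, q x ^ 2 ∂μ)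
  have hcross := mul_nonneg (mul_nonneg zero_le_two hΨ) hvq
  rw [integral_quadraticCost hq hv]
  linarith

end Integrals

theorem intervalIntegrable_of_integrableOn_Icc {f : ℝ → ℝ} {T t : ℝ}
    (hf : IntegrableOn f (Icc 0 T)) (ht : t ∈ Icc 0 T) : IntervalIntegrable f volume 0 t :=
  (intervalIntegrable_iff_integrableOn_Icc_of_le ht.1).2 (hf.mono_set (Icc_subset_Icc le_rfl ht.2))

section Inventory

variable {Ω : Type*} {Q0 : Ω → ℝ} {F G : ℝ → Ω → ℝ}

theorem inventory_convex_combination {t : ℝ} {ω : Ω} (ρ : ℝ)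
    (hF : IntervalIntegrable (F · ω) volume 0 t) (hG : IntervalIntegrable (G · ω) volume 0 t) :
    inventory Q0 (fun t ω => ρ * F t ω + (1 - ρ) * G t ω) t ω
      = ρ * inventory Q0 F t ω + (1 - ρ) * inventory Q0 G t ω := by
  simp only [inventory]
  rw [intervalIntegral.integral_add (hF.const_mul ρ) (hG.const_mul (1 - ρ)),
    intervalIntegral.integral_const_mul, intervalIntegral.integral_const_mul]
  ring

theorem inventory_sub_inventory {t : ℝ} {ω : Ω}
    (hF : IntervalIntegrable (F · ω) volume 0 t) (hG : IntervalIntegrable (G · ω) volume 0 t) :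
    inventory Q0 F t ω - inventory Q0 G t ω = ∫ u in (0:ℝ)..t, (F u ω - G u ω) := by
  simp only [inventory]
  rw [intervalIntegral.integral_sub hF hG]
  ring

variable [MeasurableSpace Ω] {P : Measure Ω} {T : ℝ}

theorem memLp_two_inventory (hQ0 : MemLp Q0 2 P)
    (hF : Measurable (uncurry F))
    (hF2 : ∫⁻ ω, (∫⁻ t in Icc 0 T, ENNReal.ofReal (F t ω ^ 2)) ∂P < ∞) :
    MemLp (fun p : Ω × ℝ => inventory Q0 F p.2 p.1) 2 (P.prod (volume.restrict (Icc 0 T))) :=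
  (hQ0.comp_fst _).add (memLp_two_primitive hF hF2)

theorem ae_intervalIntegrable_of_integrable_prod [SFinite P]
    (hF : Integrable (fun p : Ω × ℝ => F p.2 p.1) (P.prod (volume.restrict (Icc 0 T)))) :
    ∀ᵐ p ∂(P.prod (volume.restrict (Icc 0 T))), IntervalIntegrable (F · p.1) volume 0 p.2 := by
  filter_upwards [Measure.quasiMeasurePreserving_fst.ae hF.prod_right_ae,
    Measure.quasiMeasurePreserving_snd.ae (ae_restrict_mem measurableSet_Icc)] with p hp ht
  exact intervalIntegrable_of_integrableOn_Icc hp ht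

theorem integral_sub_mul_inventory_sub_nonneg [IsFiniteMeasure P] (hT : 0 ≤ T)
    (hF : MemLp (fun p : Ω × ℝ => F p.2 p.1) 2 (P.prod (volume.restrict (Icc 0 T))))
    (hG : MemLp (fun p : Ω × ℝ => G p.2 p.1) 2 (P.prod (volume.restrict (Icc 0 T))))
    (hqF : MemLp (fun p : Ω × ℝ => inventory Q0 F p.2 p.1) 2 (P.prod (volume.restrict (Icc 0 T))))
    (hqG : MemLp (fun p : Ω × ℝ => inventory Q0 G p.2 p.1) 2 (P.prod (volume.restrict (Icc 0 T)))) :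
    0 ≤ ∫ p, (F p.2 p.1 - G p.2 p.1) * (inventory Q0 F p.2 p.1 - inventory Q0 G p.2 p.1)
      ∂(P.prod (volume.restrict (Icc 0 T))) := by
  have hint : Integrable (fun p : Ω × ℝ =>
      (F p.2 p.1 - G p.2 p.1) * (inventory Q0 F p.2 p.1 - inventory Q0 G p.2 p.1))
      (P.prod (volume.restrict (Icc 0 T))) := (hF.sub hG).integrable_mul (hqF.sub hqG)
  rw [integral_prod _ hint]
  refine integral_nonneg_of_ae ?_
  filter_upwards [(hF.integrable one_le_two).prod_right_ae,
    (hG.integrable one_le_two).prod_right_ae] with ω hFω hGω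
  have hδ := (intervalIntegrable_of_integrableOn_Icc hFω ⟨hT, le_rfl⟩).sub
    (intervalIntegrable_of_integrableOn_Icc hGω ⟨hT, le_rfl⟩)
  calc (0 : ℝ) ≤ (∫ u in (0:ℝ)..T, (F u ω - G u ω)) ^ 2 / 2 := by positivity
    _ = ∫ t in (0:ℝ)..T, (F t ω - G t ω) * ∫ u in (0:ℝ)..t, (F u ω - G u ω) :=
      (intervalIntegral_mul_primitive hδ).symm
    _ = ∫ t in Icc 0 T, (F t ω - G t ω) * (inventory Q0 F t ω - inventory Q0 G t ω) := by
      rw [intervalIntegral.integral_of_le hT, ← integral_Icc_eq_integral_Ioc]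
      refine setIntegral_congr_fun measurableSet_Icc fun t ht => ?_
      rw [inventory_sub_inventory (intervalIntegrable_of_integrableOn_Icc hFω ht)
        (intervalIntegrable_of_integrableOn_Icc hGω ht)]

end Inventory

section Objective

variable {Ω : Type*} [MeasurableSpace Ω] {P : Measure Ω} {T : ℝ} {Ahat nubar : ℝ → Ω → ℝ}
  {l a φ Ψ : ℝ} {Q0 : Ω → ℝ} {F G : ℝ → Ω → ℝ}

theorem Hbar_eq_integral_prod [SFinite P]
    (h : Integrable (fun p : Ω × ℝ => reward a φ Ψ (Ahat p.2 p.1 + l * nubar p.2 p.1)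
      (inventory Q0 F p.2 p.1) (F p.2 p.1)) (P.prod (volume.restrict (Icc 0 T)))) :
    Hbar P T Ahat nubar l a φ Ψ Q0 F = ∫ p, reward a φ Ψ (Ahat p.2 p.1 + l * nubar p.2 p.1)
      (inventory Q0 F p.2 p.1) (F p.2 p.1) ∂(P.prod (volume.restrict (Icc 0 T))) :=
  (integral_prod _ h).symm

theorem Hbar_convex_combination [IsFiniteMeasure P] (ρ : ℝ)
    (hc : MemLp (fun p : Ω × ℝ => Ahat p.2 p.1 + l * nubar p.2 p.1) 2
      (P.prod (volume.restrict (Icc 0 T))))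
    (hF : MemLp (fun p : Ω × ℝ => F p.2 p.1) 2 (P.prod (volume.restrict (Icc 0 T))))
    (hG : MemLp (fun p : Ω × ℝ => G p.2 p.1) 2 (P.prod (volume.restrict (Icc 0 T))))
    (hqF : MemLp (fun p : Ω × ℝ => inventory Q0 F p.2 p.1) 2 (P.prod (volume.restrict (Icc 0 T))))
    (hqG : MemLp (fun p : Ω × ℝ => inventory Q0 G p.2 p.1) 2 (P.prod (volume.restrict (Icc 0 T)))) :
    Hbar P T Ahat nubar l a φ Ψ Q0 (fun t ω => ρ * F t ω + (1 - ρ) * G t ω)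
      = ρ * Hbar P T Ahat nubar l a φ Ψ Q0 F + (1 - ρ) * Hbar P T Ahat nubar l a φ Ψ Q0 G
        + ρ * (1 - ρ) * ∫ p, quadraticCost a φ Ψ (inventory Q0 F p.2 p.1 - inventory Q0 G p.2 p.1)
            (F p.2 p.1 - G p.2 p.1) ∂(P.prod (volume.restrict (Icc 0 T))) := by
  have hrF := integrable_reward (a := a) (φ := φ) (Ψ := Ψ) hc hqF hF
  have hrG := integrable_reward (a := a) (φ := φ) (Ψ := Ψ) hc hqG hG
  have hK := integrable_quadraticCost (a := a) (φ := φ) (Ψ := Ψ) (hqF.sub hqG) (hF.sub hG)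
  have hpt : ∀ᵐ p ∂(P.prod (volume.restrict (Icc 0 T))),
      reward a φ Ψ (Ahat p.2 p.1 + l * nubar p.2 p.1)
        (inventory Q0 (fun t ω => ρ * F t ω + (1 - ρ) * G t ω) p.2 p.1)
        (ρ * F p.2 p.1 + (1 - ρ) * G p.2 p.1)
      = ρ * reward a φ Ψ (Ahat p.2 p.1 + l * nubar p.2 p.1) (inventory Q0 F p.2 p.1) (F p.2 p.1)
        + (1 - ρ) * reward a φ Ψ (Ahat p.2 p.1 + l * nubar p.2 p.1)
            (inventory Q0 G p.2 p.1) (G p.2 p.1)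
        + ρ * (1 - ρ) * quadraticCost a φ Ψ (inventory Q0 F p.2 p.1 - inventory Q0 G p.2 p.1)
            (F p.2 p.1 - G p.2 p.1) := by
    filter_upwards [ae_intervalIntegrable_of_integrable_prod (hF.integrable one_le_two),
      ae_intervalIntegrable_of_integrable_prod (hG.integrable one_le_two)] with p hFp hGp
    rw [inventory_convex_combination ρ hFp hGp, reward_convex_combination]
  rw [Hbar_eq_integral_prod ((((hrF.const_mul ρ).add (hrG.const_mul (1 - ρ))).add
      (hK.const_mul (ρ * (1 - ρ)))).congr (hpt.mono fun p hp => hp.symm)), integral_congr_ae hpt,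
    Hbar_eq_integral_prod hrF, Hbar_eq_integral_prod hrG, integral_add, integral_add,
    integral_const_mul, integral_const_mul, integral_const_mul]
  exacts [hrF.const_mul ρ, hrG.const_mul (1 - ρ), (hrF.const_mul ρ).add (hrG.const_mul (1 - ρ)),
    hK.const_mul _]

end Objective

/-- The functional `H̄` is strictly concave on `H²_T`. -/
theorem stmt_2 {Ω : Type*} {m0 : MeasurableSpace Ω} (P : Measure Ω) [IsProbabilityMeasure P]
    (T : ℝ) (hT : 0 < T)
    (Ahat nubar : ℝ → Ω → ℝ)
    (hAhatmeas : Measurable (Function.uncurry Ahat))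
    (hnubarmeas : Measurable (Function.uncurry nubar))
    (hAhat2 : (∫⁻ ω, (∫⁻ t in Icc (0 : ℝ) T, ENNReal.ofReal ((Ahat t ω) ^ 2)) ∂P) < ⊤)
    (hnubar2 : (∫⁻ ω, (∫⁻ t in Icc (0 : ℝ) T, ENNReal.ofReal ((nubar t ω) ^ 2)) ∂P) < ⊤)
    (l a φ Ψ : ℝ) (ha : 0 < a) (hφ : 0 ≤ φ) (hΨ : 0 < Ψ)
    (Q0 : Ω → ℝ) (hQ0 : MemLp Q0 2 P)
    (ν w : ℝ → Ω → ℝ)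
    (hνmeas : Measurable (Function.uncurry ν))
    (hwmeas : Measurable (Function.uncurry w))
    (hν2 : (∫⁻ ω, (∫⁻ t in Icc (0 : ℝ) T, ENNReal.ofReal ((ν t ω) ^ 2)) ∂P) < ⊤)
    (hw2 : (∫⁻ ω, (∫⁻ t in Icc (0 : ℝ) T, ENNReal.ofReal ((w t ω) ^ 2)) ∂P) < ⊤)
    (hdiff : 0 < (P.prod (volume.restrict (Icc (0 : ℝ) T)))
        {p : Ω × ℝ | ν p.2 p.1 ≠ w p.2 p.1})
    (ρ : ℝ) (hρ : ρ ∈ Set.Ioo (0 : ℝ) 1) :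
    ρ * Hbar P T Ahat nubar l a φ Ψ Q0 ν + (1 - ρ) * Hbar P T Ahat nubar l a φ Ψ Q0 w
      < Hbar P T Ahat nubar l a φ Ψ Q0
          (fun t ω => ρ * ν t ω + (1 - ρ) * w t ω) := by
  obtain ⟨hρ0, hρ1⟩ := hρ
  have hν := memLp_two_uncurry_swap hνmeas hν2
  have hw := memLp_two_uncurry_swap hwmeas hw2
  have hc := (memLp_two_uncurry_swap hAhatmeas hAhat2).add
    ((memLp_two_uncurry_swap hnubarmeas hnubar2).const_mul l)
  have hqν := memLp_two_inventory hQ0 hνmeas hν2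
  have hqw := memLp_two_inventory hQ0 hwmeas hw2
  have hsupp : support (fun p : Ω × ℝ => ν p.2 p.1 - w p.2 p.1) = {p | ν p.2 p.1 ≠ w p.2 p.1} := by
    ext p
    simp [sub_eq_zero]
  have hcost := integral_quadraticCost_pos (a := a) (φ := φ) (Ψ := Ψ)
    (q := fun p : Ω × ℝ => inventory Q0 ν p.2 p.1 - inventory Q0 w p.2 p.1)
    (v := fun p : Ω × ℝ => ν p.2 p.1 - w p.2 p.1) ha hφ hΨ.le (hqν.sub hqw) (hν.sub hw)
    (integral_sub_mul_inventory_sub_nonneg hT.le hν hw hqν hqw) (hsupp ▸ hdiff)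
  rw [Hbar_convex_combination ρ hc hν hw hqν hqw]
  nlinarith [mul_pos (mul_pos hρ0 (sub_pos.2 hρ1)) hcost]
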